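/- Let K be a compact metric space and f : K → ℂ a bounded function. Then f belongs to D(K) if and only if the transfinite oscillation osc_α f is a bounded function for every countable ordinal α. -/

import Mathlib

open Filter Topology

section DKdefs
variable {K : Type*} [MetricSpace K] [CompactSpace K]

/-- A bounded lower semicontinuous real function. -/
def BddLSC (u : K → ℝ) : Prop := LowerSemicontinuous u ∧ ∃ M : ℝ, ∀ x, |u x| ≤ M

/-- `f ∈ D(K)`: `f = (u₁ - u₂) + i(u₃ - u₄)` with the `uᵢ` bounded lower semicontinuous. -/
def MemDK (f : K → ℂ) : Prop :=
  ∃ u₁ u₂ u₃ u₄ : K → ℝ, BddLSC u₁ ∧ BddLSC u₂ ∧ BddLSC u₃ ∧ BddLSC u₄ ∧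
    ∀ x, f x = ((u₁ x - u₂ x : ℝ) : ℂ) + Complex.I * ((u₃ x - u₄ x : ℝ) : ℂ)

/-- `f ∈ D(K)` for real `f`: a difference of bounded lower semicontinuous functions. -/
def MemDKReal (f : K → ℝ) : Prop :=
  ∃ u₁ u₂ : K → ℝ, BddLSC u₁ ∧ BddLSC u₂ ∧ ∀ x, f x = u₁ x - u₂ x

/-- Upper semicontinuous envelope `Ug(x) = limsup_{y → x} g(y)` (non-exclusive limsup). -/
noncomputable def uscEnv (g : K → EReal) : K → EReal := fun x => limsup g (𝓝 x)

/-- The transfinite oscillations `osc_β f` of a complex-valued function. -/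
noncomputable def oscOrd (f : K → ℂ) (β : Ordinal) : K → EReal :=
  Ordinal.limitRecOn β (fun _ => (0 : EReal))
    (fun _ ih => uscEnv fun x =>
      limsup (fun y => ((‖f y - f x‖ : ℝ) : EReal) + ih y) (𝓝 x))
    (fun β _ ih => uscEnv fun x => ⨆ (α : Ordinal) (h : α < β), ih α h x)

/-- The transfinite oscillations `osc_β f` of a real-valued function. -/
noncomputable def oscOrdR (f : K → ℝ) (β : Ordinal) : K → EReal :=
  Ordinal.limitRecOn β (fun _ => (0 : EReal))
    (fun _ ih => uscEnv fun x =>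
      limsup (fun y => ((|f y - f x| : ℝ) : EReal) + ih y) (𝓝 x))
    (fun β _ ih => uscEnv fun x => ⨆ (α : Ordinal) (h : α < β), ih α h x)

/-- The positive transfinite oscillations `v_β f` of a real-valued function
(as `osc_β`, but with `f y - f x` in place of `|f y - f x|`). -/
noncomputable def vOrd (f : K → ℝ) (β : Ordinal) : K → EReal :=
  Ordinal.limitRecOn β (fun _ => (0 : EReal))
    (fun _ ih => uscEnv fun x =>
      limsup (fun y => ((f y - f x : ℝ) : EReal) + ih y) (𝓝 x))
    (fun β _ ih => uscEnv fun x => ⨆ (α : Ordinal) (h : α < β), ih α h x)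

/-- The `D(K)`-norm of a real function: the infimum of `sup_{x} Σ_j |φ_j x|` over all
pointwise representations `f = Σ_j φ_j` with `φ_j` continuous. -/
noncomputable def DNorm (f : K → ℝ) : ℝ :=
  sInf {M : ℝ | ∃ φ : ℕ → K → ℝ, (∀ j, Continuous (φ j)) ∧
    (∀ x, HasSum (fun j => φ j x) (f x)) ∧
    (∀ x, Summable fun j => |φ j x|) ∧ ∀ x, (∑' j, |φ j x|) ≤ M}

end DKdefs

/-!
If `f = (u₁ - u₂) + i (u₃ - u₄)` with bounded lower semicontinuous `uᵢ ≤ Mᵢ`, then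
`S = ∑ (Mᵢ - uᵢ)` is nonnegative, bounded and satisfies `‖f y - f x‖ + S y ≤ S x + o(1)` as
`y → x`; transfinite induction then gives `osc_β f ≤ S` for every `β`.

Conversely, let `g` be `Re f` or `Im f`. The positive oscillations `v_β g ≤ osc_β f` form an
increasing family of upper semicontinuous functions, which by second countability of `K` is
stationary at some countable `β`. The fixed point `V = v_β g` is bounded and upper semicontinuous,
and `v_{β+1} g = V` says exactly that `g + V` is upper semicontinuous, so
`g = (-V) - (-(g + V))` is a difference of bounded lower semicontinuous functions.
-/

open TopologicalSpace
open scoped Ordinal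

section Semicontinuity
variable {X : Type*} [TopologicalSpace X]

theorem UpperSemicontinuousAt.of_le_of_eq {γ : Type*} [Preorder γ] {g G : X → γ} {x : X}
    (hG : UpperSemicontinuousAt G x) (hle : ∀ y, g y ≤ G y) (heq : g x = G x) :
    UpperSemicontinuousAt g x :=
  fun r hr => (hG r (heq.ge.trans_lt hr)).mono fun y hy => (hle y).trans_lt hy

theorem upperSemicontinuousAt_coe_ereal_iff {h : X → ℝ} {x : X} :
    UpperSemicontinuousAt (fun y => (h y : EReal)) x ↔ UpperSemicontinuousAt h x :=
  ⟨fun H r hr => (H r (EReal.coe_lt_coe_iff.2 hr)).mono fun _ => EReal.coe_lt_coe_iff.1,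
    fun H => continuous_coe_real_ereal.continuousAt.comp_upperSemicontinuousAt H
      EReal.coe_strictMono.monotone⟩

theorem le_limsup_nhds {γ : Type*} [CompleteLattice γ] (g : X → γ) (x : X) :
    g x ≤ limsup g (𝓝 x) :=
  le_limsup_of_frequently_le (frequently_iff.2 fun hU => ⟨x, mem_of_mem_nhds hU, le_rfl⟩)

end Semicontinuity

section KernelOsc
variable {K : Type*} [MetricSpace K]

theorem le_uscEnv (g : K → EReal) (x : K) : g x ≤ uscEnv g x :=
  le_limsup_nhds g x

theorem upperSemicontinuous_uscEnv (g : K → EReal) : UpperSemicontinuous (uscEnv g) := by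
  intro x b hb
  obtain ⟨c, hxc, hcb⟩ := exists_between hb
  obtain ⟨U, hUc, hUo, hxU⟩ := eventually_nhds_iff.1 (eventually_lt_of_limsup_lt hxc)
  filter_upwards [hUo.mem_nhds hxU] with z hz
  exact (limsup_le_of_le (by isBoundedDefault)
    (eventually_of_mem (hUo.mem_nhds hz) fun y hy => (hUc y hy).le)).trans_lt hcb

theorem uscEnv_le {g : K → EReal} {S : K → ℝ} (hS : UpperSemicontinuous S)
    (hgS : ∀ y, g y ≤ S y) (x : K) : uscEnv g x ≤ S x :=
  (limsup_le_limsup (Eventually.of_forall hgS)).trans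
    (upperSemicontinuousAt_coe_ereal_iff.2 (hS x)).limsup_le

noncomputable def kernelOsc (k : K → K → ℝ) (β : Ordinal) : K → EReal :=
  Ordinal.limitRecOn β (fun _ => (0 : EReal))
    (fun _ ih => uscEnv fun x => limsup (fun y => (k x y : EReal) + ih y) (𝓝 x))
    (fun β _ ih => uscEnv fun x => ⨆ (α : Ordinal) (h : α < β), ih α h x)

theorem oscOrd_eq_kernelOsc (f : K → ℂ) : oscOrd f = kernelOsc fun x y => ‖f y - f x‖ := rfl

theorem vOrd_eq_kernelOsc (g : K → ℝ) : vOrd g = kernelOsc fun x y => g y - g x := rfl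

variable {k k' : K → K → ℝ}

theorem kernelOsc_zero : kernelOsc k 0 = 0 := by
  rw [kernelOsc, Ordinal.limitRecOn_zero]; rfl

theorem kernelOsc_add_one {β : Ordinal} : kernelOsc k (β + 1) =
    uscEnv fun x => limsup (fun y => (k x y : EReal) + kernelOsc k β y) (𝓝 x) := by
  rw [kernelOsc, Ordinal.limitRecOn_add_one]; rfl

theorem kernelOsc_limit {β : Ordinal} (hβ : Order.IsSuccLimit β) :
    kernelOsc k β = uscEnv fun x => ⨆ α < β, kernelOsc k α x := by
  rw [kernelOsc, Ordinal.limitRecOn_limit _ _ _ _ hβ]; rfl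

theorem upperSemicontinuous_kernelOsc (k : K → K → ℝ) (β : Ordinal) :
    UpperSemicontinuous (kernelOsc k β) := by
  induction β using Ordinal.limitRecOn with
  | zero => rw [kernelOsc_zero]; exact upperSemicontinuous_const
  | add_one => rw [kernelOsc_add_one]; exact upperSemicontinuous_uscEnv _
  | limit β hβ => rw [kernelOsc_limit hβ]; exact upperSemicontinuous_uscEnv _

theorem kernelOsc_mono_kernel (hkk : ∀ x y, k x y ≤ k' x y) (β : Ordinal) :
    kernelOsc k β ≤ kernelOsc k' β := by
  induction β using Ordinal.limitRecOn with
  | zero => rw [kernelOsc_zero, kernelOsc_zero]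
  | add_one β ih =>
    rw [kernelOsc_add_one, kernelOsc_add_one]
    exact fun x => limsup_le_limsup (Eventually.of_forall fun z =>
      limsup_le_limsup (Eventually.of_forall fun y =>
        add_le_add (EReal.coe_le_coe_iff.2 (hkk z y)) (ih y)))
  | limit β hβ ih =>
    rw [kernelOsc_limit hβ, kernelOsc_limit hβ]
    exact fun x => limsup_le_limsup (Eventually.of_forall fun z =>
      iSup₂_mono fun α hα => ih α hα z)

theorem kernelOsc_le_add_one (hk : ∀ x, 0 ≤ k x x) (β : Ordinal) :
    kernelOsc k β ≤ kernelOsc k (β + 1) := by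
  intro x
  rw [kernelOsc_add_one]
  calc kernelOsc k β x ≤ (k x x : EReal) + kernelOsc k β x :=
        le_add_of_nonneg_left (EReal.coe_nonneg.2 (hk x))
    _ ≤ limsup (fun y => (k x y : EReal) + kernelOsc k β y) (𝓝 x) :=
      le_limsup_nhds (fun y => (k x y : EReal) + kernelOsc k β y) x
    _ ≤ _ := le_uscEnv (fun z => limsup (fun y => (k z y : EReal) + kernelOsc k β y) (𝓝 z)) x

theorem monotone_kernelOsc (hk : ∀ x, 0 ≤ k x x) : Monotone (kernelOsc k) := by
  intro α β hαβ
  induction β using Ordinal.limitRecOn generalizing α with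
  | zero => rw [nonpos_iff_eq_zero.1 hαβ]
  | add_one β ih =>
    rcases hαβ.eq_or_lt with rfl | h
    · exact le_rfl
    · exact (ih (Order.lt_add_one_iff.1 h)).trans (kernelOsc_le_add_one hk β)
  | limit β hβ _ =>
    rcases hαβ.eq_or_lt with rfl | h
    · exact le_rfl
    · rw [kernelOsc_limit hβ]
      exact fun x => (le_iSup₂ (f := fun γ (_ : γ < β) => kernelOsc k γ x) α h).trans
        (le_uscEnv (fun z => ⨆ γ < β, kernelOsc k γ z) x)

end KernelOsc

section VOrd
variable {K : Type*} [MetricSpace K] (g : K → ℝ)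

theorem monotone_vOrd : Monotone (vOrd g) :=
  monotone_kernelOsc fun x => (sub_self (g x)).ge

theorem upperSemicontinuous_vOrd (β : Ordinal) : UpperSemicontinuous (vOrd g β) :=
  upperSemicontinuous_kernelOsc _ β

theorem vOrd_nonneg (β : Ordinal) (x : K) : 0 ≤ vOrd g β x := by
  simpa [vOrd_eq_kernelOsc, kernelOsc_zero] using monotone_vOrd g (zero_le : 0 ≤ β) x

theorem limsup_le_vOrd_add_one (β : Ordinal) (x : K) :
    limsup (fun y => ((g y - g x : ℝ) : EReal) + vOrd g β y) (𝓝 x) ≤ vOrd g (β + 1) x := by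
  rw [vOrd_eq_kernelOsc, kernelOsc_add_one]
  exact le_uscEnv (fun z => limsup (fun y => ((g y - g z : ℝ) : EReal) + vOrd g β y) (𝓝 z)) x

theorem vOrd_le_oscOrd {f : K → ℂ} (hgf : ∀ x y, g y - g x ≤ ‖f y - f x‖) (β : Ordinal) :
    vOrd g β ≤ oscOrd f β :=
  kernelOsc_mono_kernel hgf β

end VOrd

section OscMajorant
variable {X E F G : Type*} [TopologicalSpace X]
  [SeminormedAddGroup E] [SeminormedAddGroup F] [SeminormedAddGroup G]

def IsOscMajorant (f : X → E) (S : X → ℝ) : Prop :=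
  ∀ x, UpperSemicontinuousAt (fun y => ‖f y - f x‖ + S y) x

theorem IsOscMajorant.upperSemicontinuous {f : X → E} {S : X → ℝ} (hS : IsOscMajorant f S) :
    UpperSemicontinuous S :=
  fun x => (hS x).of_le_of_eq (fun _ => le_add_of_nonneg_left (norm_nonneg _)) (by simp)

theorem IsOscMajorant.of_norm_sub_le_add {f : X → E} {g : X → F} {h : X → G} {S T : X → ℝ}
    (hS : IsOscMajorant f S) (hT : IsOscMajorant g T)
    (hfgh : ∀ x y, ‖h y - h x‖ ≤ ‖f y - f x‖ + ‖g y - g x‖) : IsOscMajorant h (S + T) :=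
  fun x => ((hS x).add (hT x)).of_le_of_eq
    (fun y => by simp only [Pi.add_apply]; linarith [hfgh x y]) (by simp)

theorem isOscMajorant_const_sub {u : X → ℝ} (hu : LowerSemicontinuous u) (c : ℝ) :
    IsOscMajorant u fun y => c - u y := by
  intro x
  have hmax :
      (fun y => ‖u y - u x‖ + (c - u y)) = fun y => max (c - u x) (c + u x - 2 * u y) := by
    funext y
    rw [Real.norm_eq_abs, abs_eq_max_neg, ← max_add_add_right]
    congr 1 <;> ring
  rw [hmax]
  refine upperSemicontinuousAt_const.sup fun r hr => ?_
  filter_upwards [hu x ((c + u x - r) / 2) (by linarith)] with y hy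
  linarith

end OscMajorant

section DKForward
variable {K : Type*} [MetricSpace K]

theorem oscOrd_le_of_isOscMajorant {f : K → ℂ} {S : K → ℝ} (hS : IsOscMajorant f S)
    (hS₀ : 0 ≤ S) (β : Ordinal) (x : K) : oscOrd f β x ≤ S x := by
  have hSusc := hS.upperSemicontinuous
  rw [oscOrd_eq_kernelOsc]
  induction β using Ordinal.limitRecOn generalizing x with
  | zero => rw [kernelOsc_zero]; exact EReal.coe_nonneg.2 (hS₀ x)
  | add_one β ih =>
    rw [kernelOsc_add_one]
    refine uscEnv_le hSusc (fun z => ?_) x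
    calc limsup (fun y => (‖f y - f z‖ : EReal) + kernelOsc _ β y) (𝓝 z)
        ≤ limsup (fun y => ((‖f y - f z‖ + S y : ℝ) : EReal)) (𝓝 z) :=
          limsup_le_limsup (Eventually.of_forall fun y => by
            dsimp only; rw [EReal.coe_add]; exact add_le_add le_rfl (ih y))
      _ ≤ ((‖f z - f z‖ + S z : ℝ) : EReal) :=
          (upperSemicontinuousAt_coe_ereal_iff.2 (hS z)).limsup_le
      _ = S z := by simp
  | limit β hβ ih =>
    rw [kernelOsc_limit hβ]
    exact uscEnv_le hSusc (fun z => iSup₂_le fun α hα => ih α hα z) x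

theorem MemDK.exists_isOscMajorant {f : K → ℂ} (hf : MemDK f) :
    ∃ S : K → ℝ, IsOscMajorant f S ∧ 0 ≤ S ∧ BddAbove (Set.range S) := by
  obtain ⟨u₁, u₂, u₃, u₄, ⟨h₁, M₁, hM₁⟩, ⟨h₂, M₂, hM₂⟩, ⟨h₃, M₃, hM₃⟩, ⟨h₄, M₄, hM₄⟩, hf⟩ := hf
  have hre := (isOscMajorant_const_sub h₁ M₁).of_norm_sub_le_add (isOscMajorant_const_sub h₂ M₂)
    (h := fun x => u₁ x - u₂ x) fun x y => by rw [sub_sub_sub_comm]; exact norm_sub_le _ _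
  have him := (isOscMajorant_const_sub h₃ M₃).of_norm_sub_le_add (isOscMajorant_const_sub h₄ M₄)
    (h := fun x => u₃ x - u₄ x) fun x y => by rw [sub_sub_sub_comm]; exact norm_sub_le _ _
  refine ⟨_, hre.of_norm_sub_le_add him fun x y => ?_, fun x => ?_,
    ⟨2 * (M₁ + M₂ + M₃ + M₄), Set.forall_mem_range.2 fun x => ?_⟩⟩
  · calc ‖f y - f x‖
        = ‖((u₁ y - u₂ y - (u₁ x - u₂ x) : ℝ) : ℂ) +
            Complex.I * ((u₃ y - u₄ y - (u₃ x - u₄ x) : ℝ) : ℂ)‖ := by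
          rw [hf, hf]; push_cast; ring_nf
      _ ≤ _ := (norm_add_le _ _).trans_eq (by
          rw [norm_mul, Complex.norm_I, one_mul, Complex.norm_real, Complex.norm_real])
  all_goals
    simp only [Pi.add_apply, Pi.zero_apply]
    linarith [abs_le.1 (hM₁ x), abs_le.1 (hM₂ x), abs_le.1 (hM₃ x), abs_le.1 (hM₄ x)]

end DKForward

section Stabilization

theorem exists_lt_omega_one_forall_of_antitone {ι : Type*} [Countable ι]
    (P : ι → Ordinal → Prop) (hP : ∀ i, Antitone (P i)) :
    ∃ β < ω₁, ∀ i, P i β → ∀ γ < ω₁, P i γ := by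
  have hwitness : ∀ i, ∃ α < ω₁, P i α → ∀ γ < ω₁, P i γ := fun i => by
    by_cases h : ∀ γ < ω₁, P i γ
    · exact ⟨0, Ordinal.omega_pos 1, fun _ => h⟩
    · obtain ⟨α, hα, hPα⟩ := not_forall₂.1 h
      exact ⟨α, hα, fun h' => (hPα h').elim⟩
  choose α hα hαP using hwitness
  exact ⟨⨆ i, α i, Ordinal.iSup_lt_omega_one hα,
    fun i hi => hαP i (hP i (Ordinal.le_iSup α i) hi)⟩

theorem exists_lt_omega_one_add_one_eq {X : Type*} [TopologicalSpace X]
    [SecondCountableTopology X] {v : Ordinal → X → EReal} (hmono : Monotone v)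
    (husc : ∀ β, UpperSemicontinuous (v β)) : ∃ β < ω₁, v (β + 1) = v β := by
  have := (countable_countableBasis X).to_subtype
  -- `v α < q` on a basic open set is antitone in `α`, and there are countably many such conditions.
  obtain ⟨β, hβ, hstable⟩ := exists_lt_omega_one_forall_of_antitone
    (ι := countableBasis X × ℚ) (fun p α => ∀ x ∈ (p.1 : Set X), v α x < ((p.2 : ℝ) : EReal))
    fun p α γ hαγ h x hx => (hmono hαγ x).trans_lt (h x hx)
  refine ⟨β, hβ, le_antisymm (fun x => ?_) (hmono (Order.le_succ β))⟩
  by_contra! hlt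
  obtain ⟨q, hβq, hqβ⟩ := EReal.exists_rat_btwn_of_lt hlt
  obtain ⟨s, hs, hxs, hsq⟩ := (isBasis_countableBasis X).exists_subset_of_mem_open
    (show x ∈ {y | v β y < ((q : ℝ) : EReal)} from hβq) ((husc β).isOpen_preimage _)
  have hβ₁ : β + 1 < ω₁ := (Cardinal.isSuccLimit_omega 1).add_one_lt hβ
  exact (hstable (⟨s, hs⟩, q) hsq (β + 1) hβ₁ x hxs).not_gt hqβ

end Stabilization

section DKBackward
variable {K : Type*} [MetricSpace K]

theorem memDKReal_of_upperSemicontinuous_add {g V : K → ℝ} (hg : ∃ M, ∀ x, |g x| ≤ M)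
    (hV : ∃ M, ∀ x, |V x| ≤ M) (hVusc : UpperSemicontinuous V)
    (hgV : UpperSemicontinuous (g + V)) : MemDKReal g := by
  obtain ⟨M, hM⟩ := hg
  obtain ⟨N, hN⟩ := hV
  have neg_lsc {h : K → ℝ} (hh : UpperSemicontinuous h) : LowerSemicontinuous (-h) :=
    continuous_neg.comp_upperSemicontinuous_antitone hh fun _ _ => neg_le_neg
  refine ⟨-V, -(g + V), ⟨neg_lsc hVusc, N, fun x => ?_⟩, ⟨neg_lsc hgV, M + N, fun x => ?_⟩,
    fun x => ?_⟩
  · simpa using hN x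
  · rw [Pi.neg_apply, abs_neg]
    exact (abs_add_le _ _).trans (add_le_add (hM x) (hN x))
  · simp

theorem upperSemicontinuousAt_add_of_limsup_le {g V : K → ℝ} {x : K}
    (h : limsup (fun y => ((g y - g x : ℝ) : EReal) + V y) (𝓝 x) ≤ V x) :
    UpperSemicontinuousAt (g + V) x := by
  have hshift : UpperSemicontinuousAt (fun y => (g + V) y - g x) x := by
    refine upperSemicontinuousAt_coe_ereal_iff.1 (upperSemicontinuousAt_iff_limsup_le.2 ?_)
    convert h using 2
    · funext y
      rw [← EReal.coe_add, Pi.add_apply, add_sub_right_comm]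
    · simp
  have := hshift.add (upperSemicontinuousAt_const (z := g x))
  simp only [sub_add_cancel] at this
  exact this

theorem memDKReal_of_vOrd_bounded [SecondCountableTopology K] {g : K → ℝ} (hg : ∃ M, ∀ x, |g x| ≤ M)
    (hv : ∀ β < ω₁, ∃ M : ℝ, ∀ x, vOrd g β x ≤ M) : MemDKReal g := by
  obtain ⟨β, hβ, hfix⟩ :=
    exists_lt_omega_one_add_one_eq (monotone_vOrd g) (upperSemicontinuous_vOrd g)
  obtain ⟨M, hM⟩ := hv β hβ
  set V : K → ℝ := fun x => (vOrd g β x).toReal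
  have hV : ∀ x, (V x : EReal) = vOrd g β x := fun x =>
    EReal.coe_toReal ((hM x).trans_lt (EReal.coe_lt_top M)).ne
      (EReal.bot_lt_zero.trans_le (vOrd_nonneg g β x)).ne'
  refine memDKReal_of_upperSemicontinuous_add (V := V) hg ⟨M, fun x => ?_⟩ (fun x => ?_)
    fun x => upperSemicontinuousAt_add_of_limsup_le ?_
  · have hV₀ : 0 ≤ V x := EReal.coe_nonneg.1 ((hV x).symm ▸ vOrd_nonneg g β x)
    rw [abs_of_nonneg hV₀]
    exact EReal.coe_le_coe_iff.1 ((hV x).trans_le (hM x))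
  · exact upperSemicontinuousAt_coe_ereal_iff.1
      (by simpa only [hV] using upperSemicontinuous_vOrd g β x)
  · simpa only [hV, hfix] using limsup_le_vOrd_add_one g β x

end DKBackward

theorem memDK_of_memDKReal_re_im {K : Type*} [MetricSpace K] {f : K → ℂ}
    (hre : MemDKReal fun x => (f x).re) (him : MemDKReal fun x => (f x).im) : MemDK f := by
  obtain ⟨u₁, u₂, h₁, h₂, hu⟩ := hre
  obtain ⟨u₃, u₄, h₃, h₄, hv⟩ := him
  refine ⟨u₁, u₂, u₃, u₄, h₁, h₂, h₃, h₄, fun x => ?_⟩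
  rw [← hu, ← hv, mul_comm]
  exact (Complex.re_add_im (f x)).symm

/-- A bounded `f : K → ℂ` is in `D(K)` iff `osc_α f` is a bounded function for every
countable ordinal `α`. -/
theorem memDK_iff_oscOrd_bounded {K : Type*} [MetricSpace K] [CompactSpace K]
    (f : K → ℂ) (hf : ∃ M : ℝ, ∀ x, ‖f x‖ ≤ M) :
    MemDK f ↔
      ∀ α : Ordinal, α < (Cardinal.aleph 1).ord →
        ∃ M : ℝ, ∀ x, oscOrd f α x ≤ (M : EReal) := by
  rw [Cardinal.ord_aleph]
  constructor
  · rintro hDK α -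
    obtain ⟨S, hS, hS₀, M, hM⟩ := hDK.exists_isOscMajorant
    exact ⟨M, fun x => (oscOrd_le_of_isOscMajorant hS hS₀ α x).trans
      (EReal.coe_le_coe_iff.2 (hM ⟨x, rfl⟩))⟩
  · intro hosc
    obtain ⟨M, hM⟩ := hf
    have hcomponent {g : K → ℝ} (hgf : ∀ x y, g y - g x ≤ ‖f y - f x‖) (hg : ∀ x, |g x| ≤ ‖f x‖) :
        MemDKReal g :=
      memDKReal_of_vOrd_bounded ⟨M, fun x => (hg x).trans (hM x)⟩ fun β hβ =>
        (hosc β hβ).imp fun C hC x => (vOrd_le_oscOrd g hgf β x).trans (hC x)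
    exact memDK_of_memDKReal_re_im
      (hcomponent (fun x y => by simpa using Complex.re_le_norm (f y - f x))
        fun x => Complex.abs_re_le_norm _)
      (hcomponent (fun x y => by simpa using Complex.im_le_norm (f y - f x))
        fun x => Complex.abs_im_le_norm _)
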